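/- If φ is a homogeneous quasimorphism on G and g is a product of n commutators, then |φ(g)| ≤ (2n − 1)·D(φ). In particular |φ(g)| ≤ 2·cl(g)·D(φ) for g ∈ [G,G]. -/

import Mathlib

open Filter
open scoped commutatorElement

/-- The set of `n` such that `g` is a product of `n` commutators. -/
def clSet {G : Type*} [Group G] (g : G) : Set ℕ :=
  {n | ∃ a b : Fin n → G, g = (List.ofFn fun i => ⁅a i, b i⁆).prod}

/-- Commutator length: the least number of commutators whose product is `g`. -/
noncomputable def cl {G : Type*} [Group G] (g : G) : ℕ := sInf (clSet g)

/-- Stable commutator length, defined (via Fekete's lemma) as the infimum of `cl (g^n) / n`. -/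
noncomputable def scl {G : Type*} [Group G] (g : G) : ℝ :=
  ⨅ n : ℕ+, (cl (g ^ (n : ℕ)) : ℝ) / (n : ℝ)

/-!
A homogeneous quasimorphism is invariant under conjugation: `|φ (h g h⁻¹) - φ g| ≤ 2D` holds for
every `g`, and applying this to `gⁿ` multiplies the left side by `n`. Hence
`φ ⁅a, b⁆ = φ (a b a⁻¹) + φ b⁻¹ ± D = ± D`, and a product of `n` elements with `|φ| ≤ D` has
`|φ| ≤ nD + (n - 1)D`, each of the `n - 1` multiplications costing at most the defect.
-/

/-- `φ` is a quasimorphism of defect at most `D`. -/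
def IsQuasimorphism {G : Type*} [Group G] (φ : G → ℝ) (D : ℝ) : Prop :=
  ∀ g h : G, |φ g + φ h - φ (g * h)| ≤ D

def IsHomogeneous {G : Type*} [Group G] (φ : G → ℝ) : Prop :=
  ∀ (g : G) (n : ℤ), φ (g ^ n) = n * φ g

theorem eq_zero_of_forall_nat_mul_abs_le {α : Type*} [Ring α] [LinearOrder α]
    [IsStrictOrderedRing α] [Archimedean α] {c C : α} (h : ∀ n : ℕ, n * |c| ≤ C) : c = 0 := by
  by_contra hc
  obtain ⟨n, hn⟩ := Archimedean.arch (C + 1) (abs_pos.2 hc)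
  rw [nsmul_eq_mul] at hn
  exact (lt_add_one C).not_ge (hn.trans (h n))

theorem inv_commutatorSet (G : Type*) [Group G] : (commutatorSet G)⁻¹ = commutatorSet G := by
  ext x
  simp only [Set.mem_inv, mem_commutatorSet_iff]
  exact ⟨fun ⟨a, b, h⟩ => ⟨b, a, by rw [← commutatorElement_inv, h, inv_inv]⟩,
    fun ⟨a, b, h⟩ => ⟨b, a, by rw [← commutatorElement_inv, h]⟩⟩

theorem clSet_nonempty_of_mem_commutator {G : Type*} [Group G] {g : G}
    (hg : g ∈ commutator G) : (clSet g).Nonempty := by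
  rw [commutator_eq_closure, ← Subgroup.mem_toSubmonoid, Subgroup.closure_toSubmonoid,
    inv_commutatorSet, Set.union_self] at hg
  obtain ⟨l, hl, rfl⟩ := Submonoid.exists_list_of_mem_closure hg
  choose a b hab using fun i : Fin l.length => mem_commutatorSet_iff.1 (hl _ (l.get_mem i))
  exact ⟨l.length, a, b, by simp only [hab, List.ofFn_get]⟩

namespace IsHomogeneous

variable {G : Type*} [Group G] {φ : G → ℝ}

theorem map_one (hφ : IsHomogeneous φ) : φ 1 = 0 := by
  simpa using hφ 1 0

theorem map_inv (hφ : IsHomogeneous φ) (g : G) : φ g⁻¹ = -φ g := by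
  simpa using hφ g (-1)

theorem map_pow (hφ : IsHomogeneous φ) (g : G) (n : ℕ) : φ (g ^ n) = n * φ g := by
  simpa using hφ g n

end IsHomogeneous

namespace IsQuasimorphism

variable {G : Type*} [Group G] {φ : G → ℝ} {D : ℝ}

theorem defect_nonneg (hφ : IsQuasimorphism φ D) : 0 ≤ D :=
  (abs_nonneg _).trans (hφ 1 1)

theorem abs_map_mul_le (hφ : IsQuasimorphism φ D) (x y : G) :
    |φ (x * y)| ≤ |φ x| + |φ y| + D :=
  calc |φ (x * y)| = |(φ x + φ y) - (φ x + φ y - φ (x * y))| := by ring_nf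
    _ ≤ |φ x + φ y| + |φ x + φ y - φ (x * y)| := abs_sub _ _
    _ ≤ |φ x| + |φ y| + D := add_le_add (abs_add_le _ _) (hφ x y)

theorem abs_map_list_prod_le (hφ : IsQuasimorphism φ D) {C : ℝ} (x : G) (l : List G)
    (hl : ∀ y ∈ x :: l, |φ y| ≤ C) :
    |φ (x :: l).prod| ≤ (l.length + 1) * C + l.length * D := by
  induction l generalizing x with
  | nil => simpa using hl x List.mem_cons_self
  | cons y l ih =>
    have hx := hl x List.mem_cons_self
    have hyl := ih y fun z hz => hl z (List.mem_cons_of_mem x hz)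
    calc |φ (x :: y :: l).prod| ≤ |φ x| + |φ (y :: l).prod| + D := hφ.abs_map_mul_le _ _
      _ ≤ C + ((l.length + 1) * C + l.length * D) + D := by gcongr
      _ = ((y :: l).length + 1) * C + (y :: l).length * D := by
        rw [List.length_cons]; push_cast; ring

theorem abs_map_conj_sub_le (hφ : IsQuasimorphism φ D) (hhom : IsHomogeneous φ) (h x : G) :
    |φ (h * x * h⁻¹) - φ x| ≤ 2 * D := by
  have h₁ := hφ h x
  have h₂ := hφ (h * x) h⁻¹
  rw [hhom.map_inv] at h₂
  rw [abs_le] at *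
  constructor <;> linarith

theorem map_conj (hφ : IsQuasimorphism φ D) (hhom : IsHomogeneous φ) (h g : G) :
    φ (h * g * h⁻¹) = φ g := by
  rw [← sub_eq_zero]
  refine eq_zero_of_forall_nat_mul_abs_le (C := 2 * D) fun n => ?_
  calc n * |φ (h * g * h⁻¹) - φ g| = |φ (h * g ^ n * h⁻¹) - φ (g ^ n)| := by
        rw [← conj_pow, hhom.map_pow, hhom.map_pow, ← mul_sub, abs_mul, Nat.abs_cast]
    _ ≤ 2 * D := hφ.abs_map_conj_sub_le hhom h _

theorem abs_map_commutatorElement_le (hφ : IsQuasimorphism φ D) (hhom : IsHomogeneous φ)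
    (a b : G) : |φ ⁅a, b⁆| ≤ D := by
  have := hφ (a * b * a⁻¹) b⁻¹
  rwa [hφ.map_conj hhom, hhom.map_inv, add_neg_cancel, zero_sub, abs_neg,
    ← commutatorElement_def] at this

theorem abs_map_prod_commutators_le (hφ : IsQuasimorphism φ D) (hhom : IsHomogeneous φ)
    {n : ℕ} (hn : 1 ≤ n) (a b : Fin n → G) :
    |φ (List.ofFn fun i => ⁅a i, b i⁆).prod| ≤ (2 * (n : ℝ) - 1) * D := by
  obtain ⟨m, rfl⟩ := Nat.exists_eq_add_of_le' hn
  rw [List.ofFn_succ]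
  refine (hφ.abs_map_list_prod_le (C := D) _ _ ?_).trans_eq ?_
  · simp only [List.mem_cons, List.mem_ofFn]
    rintro _ (rfl | ⟨i, rfl⟩) <;> exact hφ.abs_map_commutatorElement_le hhom _ _
  · rw [List.length_ofFn]; push_cast; ring

theorem abs_map_le_two_mul_of_mem_clSet (hφ : IsQuasimorphism φ D) (hhom : IsHomogeneous φ)
    {g : G} {n : ℕ} (hn : n ∈ clSet g) : |φ g| ≤ 2 * n * D := by
  obtain ⟨a, b, rfl⟩ := hn
  rcases Nat.eq_zero_or_pos n with rfl | hpos
  · simp [hhom.map_one]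
  · linarith [hφ.abs_map_prod_commutators_le hhom hpos a b, hφ.defect_nonneg]

end IsQuasimorphism

theorem stmt_11 {G : Type*} [Group G] (φ : G → ℝ) (D : ℝ)
    (hqm : ∀ g h : G, |φ g + φ h - φ (g * h)| ≤ D)
    (hhom : ∀ (g : G) (n : ℤ), φ (g ^ n) = n * φ g) :
    (∀ (n : ℕ), 1 ≤ n → ∀ a b : Fin n → G,
      |φ (List.ofFn fun i => ⁅a i, b i⁆).prod| ≤ (2 * (n : ℝ) - 1) * D) ∧
    (∀ g : G, g ∈ commutator G → |φ g| ≤ 2 * (cl g : ℝ) * D) :=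
  ⟨fun _ hn a b => IsQuasimorphism.abs_map_prod_commutators_le hqm hhom hn a b,
    fun _ hg => IsQuasimorphism.abs_map_le_two_mul_of_mem_clSet hqm hhom
      (Nat.sInf_mem (clSet_nonempty_of_mem_commutator hg))⟩
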